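/- arXiv:2305.11781 — 2 statements merged into one kernel-verified Lean document; each statement's English description precedes it below -/
import Mathlib

section
/- Horizontal decomposition preserves the path-constraint semantics: if a DAG G with vertex labels is partitioned into subgraphs G₁, …, Gₙ where Gᵢ consists of all vertices and edges reachable from the i-th entry vertex of G, then the disjunction over all complete paths of G of the conjunctions of labels equals the disjunction over i of the same quantity computed over Gᵢ; in particular, every complete path of G appears (as a label sequence) as a complete path of exactly one Gᵢ. -/
/-- A directed acyclic graph on a vertex type `V`. -/
structure DAG (V : Type*) where
  E : V → V → Prop
  acyclic : ∀ v, ¬ Relation.TransGen E v v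

/-- An entry vertex of the induced subgraph on `S`: it lies in `S` and has no incoming
edge from inside `S`.  (For `S = Set.univ` this is an entry vertex of the whole graph.) -/
def entryIn {V : Type*} (G : DAG V) (S : Set V) (v : V) : Prop :=
  v ∈ S ∧ ∀ u ∈ S, ¬ G.E u v

/-- An exit vertex of the induced subgraph on `S`. -/
def exitIn {V : Type*} (G : DAG V) (S : Set V) (v : V) : Prop :=
  v ∈ S ∧ ∀ u ∈ S, ¬ G.E v u

/-- A complete (entry-to-exit) path of the induced subgraph of `G` on `S`. -/
def completePathIn {V : Type*} (G : DAG V) (S : Set V) (p : List V) : Prop :=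
  ∃ h : p ≠ [], (∀ x ∈ p, x ∈ S) ∧ p.Chain' G.E ∧
    entryIn G S (p.head h) ∧ exitIn G S (p.getLast h)

/-- The set of vertices reachable from `e` (via directed paths, possibly of length 0). -/
def reachSet {V : Type*} (G : DAG V) (e : V) : Set V :=
  {u | Relation.ReflTransGen G.E e u}

/-!
A complete path of `G` starts at an entry vertex `v`, so all of it lies in the set reachable
from `v`; conversely, inside the reachable set of an entry vertex `v` the only vertex without
a predecessor is `v` itself, and a reachable vertex has an outgoing edge in `G` iff it has one
inside the reachable set. Hence the complete paths of `Gᵢ` are exactly the complete paths of `G`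
starting at the `i`-th entry, and these families partition the complete paths of `G`.
-/

open Relation

theorem List.IsChain.reflTransGen_head {α : Type*} {r : α → α → Prop} {l : List α}
    (hl : l.IsChain r) (hne : l ≠ []) {x : α} (hx : x ∈ l) :
    ReflTransGen r (l.head hne) x :=
  hl.induction (ReflTransGen r (l.head hne) ·) l (fun _ _ h₁ h₂ => h₂.tail h₁)
    (fun _ => .refl) x hx

namespace DAG

variable {V : Type*} (G : DAG V) {v w : V}

theorem eq_of_entryIn_reachSet (hw : entryIn G (reachSet G v) w) : w = v := by
  obtain ⟨hvw, hno_pred⟩ := hw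
  rcases reflTransGen_iff_eq_or_transGen.1 hvw with rfl | hvw
  · rfl
  · obtain ⟨u, hvu, huw⟩ := TransGen.tail'_iff.1 hvw
    exact absurd huw (hno_pred u hvu)

theorem exitIn_reachSet_iff (hw : w ∈ reachSet G v) :
    exitIn G (reachSet G v) w ↔ exitIn G Set.univ w :=
  ⟨fun ⟨_, hno_succ⟩ => ⟨trivial, fun u _ hwu => hno_succ u (ReflTransGen.tail hw hwu) hwu⟩,
    fun ⟨_, hno_succ⟩ => ⟨hw, fun u _ => hno_succ u trivial⟩⟩

theorem completePathIn_reachSet_iff (hv : entryIn G Set.univ v) {p : List V} :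
    completePathIn G (reachSet G v) p ↔ completePathIn G Set.univ p ∧ p.head? = some v := by
  constructor
  · rintro ⟨hne, hmem, hchain, hentry, hexit⟩
    have hhead : p.head hne = v := eq_of_entryIn_reachSet G hentry
    exact ⟨⟨hne, fun _ _ => trivial, hchain, hhead ▸ hv,
      (exitIn_reachSet_iff G (hmem _ (p.getLast_mem hne))).1 hexit⟩,
      (List.head_eq_iff_head?_eq_some hne).1 hhead⟩
  · rintro ⟨⟨hne, -, hchain, hentry, hexit⟩, hhead⟩
    have hv_head : p.head hne = v := (List.head_eq_iff_head?_eq_some hne).2 hhead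
    have hmem : ∀ x ∈ p, x ∈ reachSet G v := fun x hx =>
      hv_head ▸ hchain.reflTransGen_head hne hx
    exact ⟨hne, hmem, hchain, ⟨hmem _ (p.head_mem hne), fun u _ => hentry.2 u trivial⟩,
      (exitIn_reachSet_iff G (hmem _ (p.getLast_mem hne))).2 hexit⟩

end DAG

theorem horizontal_decomposition_general {V ι : Type*} (G : DAG V)
    (label : V → Prop) (e : ι → V)
    (hinj : Function.Injective e)
    (hent : ∀ i, entryIn G Set.univ (e i))
    (hsurj : ∀ v, entryIn G Set.univ v → ∃ i, e i = v) :
    ((∃ p, completePathIn G Set.univ p ∧ ∀ x ∈ p, label x) ↔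
      ∃ i, ∃ p, completePathIn G (reachSet G (e i)) p ∧ ∀ x ∈ p, label x) ∧
    (∀ p, completePathIn G Set.univ p →
      ∃! i, completePathIn G (reachSet G (e i)) p) := by
  have partition : ∀ p, completePathIn G Set.univ p →
      ∃! i, completePathIn G (reachSet G (e i)) p := by
    intro p hp
    have ⟨hne, _, _, hentry, _⟩ := hp
    obtain ⟨i, hi⟩ := hsurj _ hentry
    have hhead : p.head? = some (e i) := (List.head_eq_iff_head?_eq_some hne).1 hi.symm
    refine ⟨i, (G.completePathIn_reachSet_iff (hent i)).2 ⟨hp, hhead⟩, fun j hj => hinj ?_⟩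
    exact Option.some_injective _ <|
      ((G.completePathIn_reachSet_iff (hent j)).1 hj).2.symm.trans hhead
  refine ⟨⟨?_, ?_⟩, partition⟩
  · rintro ⟨p, hp, hlabel⟩
    obtain ⟨i, hi, -⟩ := partition p hp
    exact ⟨i, p, hi, hlabel⟩
  · rintro ⟨i, p, hp, hlabel⟩
    exact ⟨p, ((G.completePathIn_reachSet_iff (hent i)).1 hp).1, hlabel⟩

/-- Horizontal decomposition preserves the path-constraint semantics: if the entry
vertices of a finite labeled DAG `G` are enumerated by `e : ι → V` and `Gᵢ` is the
subgraph of all vertices and edges reachable from the `i`-th entry, then the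
disjunction over complete paths of `G` of the conjunction of labels equals the
disjunction over `i` of the same quantity over `Gᵢ`; moreover every complete path of
`G` is a complete path of exactly one `Gᵢ`. -/
theorem horizontal_decomposition {V ι : Type*} [Fintype V] (G : DAG V)
    (label : V → Prop) (e : ι → V)
    (hinj : Function.Injective e)
    (hent : ∀ i, entryIn G Set.univ (e i))
    (hsurj : ∀ v, entryIn G Set.univ v → ∃ i, e i = v) :
    ((∃ p, completePathIn G Set.univ p ∧ ∀ x ∈ p, label x) ↔
      ∃ i, ∃ p, completePathIn G (reachSet G (e i)) p ∧ ∀ x ∈ p, label x) ∧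
    (∀ p, completePathIn G Set.univ p →
      ∃! i, completePathIn G (reachSet G (e i)) p) :=
  horizontal_decomposition_general G label e hinj hent hsurj
end

section
/- For formulas ρ₁, ρ₂, ρ₃ over atoms with ∧ and ∨, the constraint represented by the AFG (ρ₁ ∨ ρ₂-part) ⋈ vertex(ρ₃-part), i.e., the sequential composition of a disjoint union with another graph, equals (ρ₁ ∨ ρ₂) ∧ ρ₃; in particular, at the level of represented constraints, sequential composition of AFGs corresponds exactly to conjunction and disjoint union corresponds to disjunction: constraint(G₁ ⋈ G₂) ≡ constraint(G₁) ∧ constraint(G₂) and constraint(G₁ ⊎ G₂) ≡ constraint(G₁) ∨ constraint(G₂). -/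
/-- Positive propositional formulas built from atoms, conjunction and disjunction. -/
inductive PForm (α : Type*) where
  | atom : α → PForm α
  | conj : PForm α → PForm α → PForm α
  | disj : PForm α → PForm α → PForm α

/-- Evaluation of a formula under a valuation of the atoms. -/
def PForm.eval {α : Type*} (v : α → Prop) : PForm α → Prop
  | .atom a => v a
  | .conj ρ₁ ρ₂ => ρ₁.eval v ∧ ρ₂.eval v
  | .disj ρ₁ ρ₂ => ρ₁.eval v ∨ ρ₂.eval v

/-- The complete paths of the AFG of a formula, as lists of atom labels. -/
def PForm.afgPaths {α : Type*} : PForm α → List (List α)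
  | .atom a => [[a]]
  | .conj ρ₁ ρ₂ => ρ₁.afgPaths.flatMap (fun p => ρ₂.afgPaths.map (fun q => p ++ q))
  | .disj ρ₁ ρ₂ => ρ₁.afgPaths ++ ρ₂.afgPaths

/-- Complete paths of the sequential composition `G₁ ⋈ G₂` (all exit vertices of `G₁`
connected to all entry vertices of `G₂`), given the complete paths of `G₁` and `G₂`. -/
def seqComp {α : Type*} (P Q : List (List α)) : List (List α) :=
  P.flatMap (fun p => Q.map (fun q => p ++ q))

/-- The constraint represented by a graph via its list of complete paths: the disjunction
over complete paths of the conjunction of the labels along the path. -/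
def pathsConstraint {α : Type*} (val : α → Prop) (P : List (List α)) : Prop :=
  ∃ p ∈ P, ∀ a ∈ p, val a

lemma pathsConstraint_append {α : Type*} (val : α → Prop) (P Q : List (List α)) :
    pathsConstraint val (P ++ Q) ↔ pathsConstraint val P ∨ pathsConstraint val Q := by
  simp [pathsConstraint, List.mem_append, or_and_right, exists_or]

lemma pathsConstraint_seqComp {α : Type*} (val : α → Prop) (P Q : List (List α)) :
    pathsConstraint val (seqComp P Q) ↔ pathsConstraint val P ∧ pathsConstraint val Q := by
  constructor
  · rintro ⟨r, hr, hall⟩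
    simp only [seqComp, List.mem_flatMap, List.mem_map] at hr
    obtain ⟨p, hp, q, hq, rfl⟩ := hr
    exact ⟨⟨p, hp, fun a ha => hall a (by simp [ha])⟩,
           ⟨q, hq, fun a ha => hall a (by simp [ha])⟩⟩
  · rintro ⟨⟨p, hp, h1⟩, ⟨q, hq, h2⟩⟩
    refine ⟨p ++ q, ?_, ?_⟩
    · simp only [seqComp, List.mem_flatMap, List.mem_map]
      exact ⟨p, hp, q, hq, rfl⟩
    · intro a ha
      rcases List.mem_append.mp ha with h | h
      · exact h1 a h
      · exact h2 a h

lemma pathsConstraint_afgPaths {α : Type*} (val : α → Prop) (ρ : PForm α) :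
    pathsConstraint val ρ.afgPaths ↔ ρ.eval val := by
  induction ρ with
  | atom a => simp [pathsConstraint, PForm.afgPaths, PForm.eval]
  | conj ρ₁ ρ₂ ih1 ih2 =>
    rw [PForm.eval, ← ih1, ← ih2]
    exact pathsConstraint_seqComp val _ _
  | disj ρ₁ ρ₂ ih1 ih2 =>
    rw [PForm.eval, ← ih1, ← ih2, PForm.afgPaths]
    exact pathsConstraint_append val _ _

/-- The constraint represented by `AFG(ρ₁ ∨ ρ₂) ⋈ AFG(ρ₃)` — the sequential composition
of a disjoint union with another graph — equals `(ρ₁ ∨ ρ₂) ∧ ρ₃`; in general, sequential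
composition corresponds exactly to conjunction and disjoint union to disjunction of the
represented constraints (for graphs each having at least one complete path). -/
theorem comp_conj_union_disj {α : Type*} :
    (∀ (ρ₁ ρ₂ ρ₃ : PForm α) (val : α → Prop),
      pathsConstraint val (seqComp (ρ₁.afgPaths ++ ρ₂.afgPaths) ρ₃.afgPaths) ↔
        (ρ₁.eval val ∨ ρ₂.eval val) ∧ ρ₃.eval val) ∧
    (∀ (P Q : List (List α)), P ≠ [] → Q ≠ [] → ∀ val : α → Prop,
      (pathsConstraint val (seqComp P Q) ↔ pathsConstraint val P ∧ pathsConstraint val Q) ∧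
      (pathsConstraint val (P ++ Q) ↔ pathsConstraint val P ∨ pathsConstraint val Q)) := by
  constructor
  · intro ρ₁ ρ₂ ρ₃ val
    rw [pathsConstraint_seqComp, pathsConstraint_append,
        pathsConstraint_afgPaths, pathsConstraint_afgPaths, pathsConstraint_afgPaths]
  · intro P Q _ _ val
    exact ⟨pathsConstraint_seqComp val P Q, pathsConstraint_append val P Q⟩
end
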